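/- Let A be a self-adjoint positive definite n×n matrix and let e₁,…,eₙ be an orthonormal eigenbasis of a self-adjoint positive definite matrix B with eigenvalues λⱼ > 0. Then for 0 < α < 1, |A^α B^α|_op ≤ n · max_j λⱼ^α |A^α eⱼ| and λⱼ^α |A^α eⱼ| ≤ |A B eⱼ|^α for each j (Hölder–McCarthy inequality applied to A with exponent α). -/

import Mathlib

noncomputable def opNorm {n : ℕ} (M : Matrix (Fin n) (Fin n) ℝ) : ℝ :=
  ‖Matrix.toEuclideanCLM (𝕜 := ℝ) M‖

/-!
For the operator-norm bound, `B^α eⱼ = λⱼ^α eⱼ`, so `A^α B^α eⱼ = λⱼ^α A^α eⱼ`, and any operator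
satisfies `‖T‖ ≤ ∑ⱼ ‖T eⱼ‖` on an orthonormal basis. For the second bound, `A B eⱼ = λⱼ A eⱼ`, which
leaves Hölder–McCarthy: in an eigenbasis `(bᵢ)` of `A` with eigenvalues `μᵢ ≥ 0`, the weights
`wᵢ = ⟪bᵢ, v⟫²` of a unit vector `v` sum to `1`, and `‖A^α v‖² ≤ ‖A v‖^(2α)` is Jensen's inequality
`∑ wᵢ (μᵢ²)^α ≤ (∑ wᵢ μᵢ²)^α` for the concave function `t ↦ t^α`.
-/

open Matrix InnerProductSpace RealInnerProductSpace

namespace OrthonormalBasis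

variable {ι 𝕜 E : Type*} [Fintype ι] [RCLike 𝕜] [NormedAddCommGroup E] [InnerProductSpace 𝕜 E]

lemma opNorm_le_sum_norm_apply {F : Type*} [SeminormedAddCommGroup F] [NormedSpace 𝕜 F]
    (b : OrthonormalBasis ι 𝕜 E) (T : E →L[𝕜] F) : ‖T‖ ≤ ∑ i, ‖T (b i)‖ := by
  refine T.opNorm_le_bound (by positivity) fun x => ?_
  calc ‖T x‖ = ‖∑ i, ⟪b i, x⟫_𝕜 • T (b i)‖ := by
        conv_lhs => rw [← b.sum_repr' x]
        simp only [map_sum, map_smul]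
    _ ≤ ∑ i, ‖⟪b i, x⟫_𝕜‖ * ‖T (b i)‖ := norm_sum_le_of_le _ fun i _ => norm_smul_le _ _
    _ ≤ ∑ i, ‖x‖ * ‖T (b i)‖ := by
        gcongr with i
        simpa [b.orthonormal.1 i] using norm_inner_le_norm (𝕜 := 𝕜) (b i) x
    _ = (∑ i, ‖T (b i)‖) * ‖x‖ := by rw [← Finset.mul_sum, mul_comm]

variable (b : OrthonormalBasis ι 𝕜 E) {T : E →L[𝕜] E} {d : ι → 𝕜}

lemma inner_apply_of_apply_eq_smul (hT : ∀ i, T (b i) = d i • b i) (x : E) (i : ι) :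
    ⟪b i, T x⟫_𝕜 = d i * ⟪b i, x⟫_𝕜 := by
  conv_lhs => rw [← b.sum_repr' x]
  simp only [map_sum, map_smul, hT, smul_smul, b.orthonormal.inner_right_fintype]
  exact mul_comm _ _

lemma norm_sq_apply_of_apply_eq_smul (hT : ∀ i, T (b i) = d i • b i) (x : E) :
    ‖T x‖ ^ 2 = ∑ i, ‖d i‖ ^ 2 * ‖⟪b i, x⟫_𝕜‖ ^ 2 := by
  simp only [← b.sum_sq_norm_inner_right, b.inner_apply_of_apply_eq_smul hT, norm_mul, mul_pow]

end OrthonormalBasis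

local notation "φ" => Matrix.toEuclideanCLM (𝕜 := ℝ)

namespace Matrix.IsHermitian

lemma cfc_mulVec_eigenvectorBasis {ι 𝕜 : Type*} [Fintype ι] [DecidableEq ι] [RCLike 𝕜]
    {M : Matrix ι ι 𝕜} (hM : M.IsHermitian) (f : ℝ → ℝ) (j : ι) :
    hM.cfc f *ᵥ ⇑(hM.eigenvectorBasis j) = f (hM.eigenvalues j) • ⇑(hM.eigenvectorBasis j) := by
  rw [IsHermitian.cfc, Unitary.conjStarAlgAut_apply, ← mulVec_mulVec, ← mulVec_mulVec,
    star_eigenvectorUnitary_mulVec, diagonal_mulVec_single, ← smul_eq_mul, Pi.single_smul',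
    mulVec_smul, eigenvectorUnitary_mulVec, Function.comp_apply, Function.comp_apply,
    RCLike.real_smul_eq_coe_smul (K := 𝕜)]

variable {ι : Type*} [Fintype ι] [DecidableEq ι] {M : Matrix ι ι ℝ} (hM : M.IsHermitian)

lemma toEuclideanCLM_eigenvectorBasis (j : ι) :
    φ M (hM.eigenvectorBasis j) = hM.eigenvalues j • hM.eigenvectorBasis j :=
  congrArg (WithLp.toLp 2) (hM.mulVec_eigenvectorBasis j)

lemma toEuclideanCLM_cfc_eigenvectorBasis (f : ℝ → ℝ) (j : ι) :
    φ (hM.cfc f) (hM.eigenvectorBasis j) = f (hM.eigenvalues j) • hM.eigenvectorBasis j :=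
  congrArg (WithLp.toLp 2) (hM.cfc_mulVec_eigenvectorBasis f j)

lemma toEuclideanCLM_cfc_of_eq_smul (f : ℝ → ℝ) {v : EuclideanSpace ℝ ι} {c : ℝ}
    (hv : φ M v = c • v) : φ (hM.cfc f) v = f c • v := by
  set b := hM.eigenvectorBasis
  -- `v` has no component along eigenvectors of `M` whose eigenvalue differs from `c`.
  have hcoef (i : ι) : f (hM.eigenvalues i) * ⟪b i, v⟫ = f c * ⟪b i, v⟫ := by
    have hcomp : hM.eigenvalues i * ⟪b i, v⟫ = c * ⟪b i, v⟫ := by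
      rw [← b.inner_apply_of_apply_eq_smul hM.toEuclideanCLM_eigenvectorBasis, hv,
        real_inner_smul_right]
    rcases eq_or_ne ⟪b i, v⟫ 0 with h | h
    · rw [h, mul_zero, mul_zero]
    · rw [mul_right_cancel₀ h hcomp]
  rw [← b.sum_repr' (φ (hM.cfc f) v)]
  conv_rhs => rw [← b.sum_repr' v, Finset.smul_sum]
  simp only [b.inner_apply_of_apply_eq_smul (hM.toEuclideanCLM_cfc_eigenvectorBasis f), hcoef,
    smul_smul]

end Matrix.IsHermitian

theorem Matrix.PosSemidef.norm_toEuclideanCLM_cfc_rpow_le {ι : Type*} [Fintype ι] [DecidableEq ι]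
    {A : Matrix ι ι ℝ} (hA : A.PosSemidef) {α : ℝ} (hα0 : 0 ≤ α) (hα1 : α ≤ 1)
    {v : EuclideanSpace ℝ ι} (hv : ‖v‖ = 1) :
    ‖φ (hA.1.cfc (fun x => x ^ α)) v‖ ≤ ‖φ A v‖ ^ α := by
  let b := hA.1.eigenvectorBasis
  have hweights : ∑ i, ⟪b i, v⟫ ^ 2 = 1 := by rw [b.sum_sq_inner_right, hv, one_pow]
  have hAv : ‖φ A v‖ ^ 2 = ∑ i, ⟪b i, v⟫ ^ 2 • hA.1.eigenvalues i ^ 2 := by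
    rw [b.norm_sq_apply_of_apply_eq_smul hA.1.toEuclideanCLM_eigenvectorBasis]
    exact Finset.sum_congr rfl fun i _ => by
      rw [Real.norm_eq_abs, Real.norm_eq_abs, sq_abs, sq_abs, smul_eq_mul, mul_comm]
  have hAαv : ‖φ (hA.1.cfc (fun x => x ^ α)) v‖ ^ 2 =
      ∑ i, ⟪b i, v⟫ ^ 2 • (hA.1.eigenvalues i ^ 2) ^ α := by
    rw [b.norm_sq_apply_of_apply_eq_smul (hA.1.toEuclideanCLM_cfc_eigenvectorBasis _)]
    exact Finset.sum_congr rfl fun i _ => by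
      rw [Real.norm_eq_abs, Real.norm_eq_abs, sq_abs, sq_abs, smul_eq_mul, mul_comm,
        Real.rpow_pow_comm (hA.eigenvalues_nonneg i)]
  have hjensen := (Real.concaveOn_rpow hα0 hα1).le_map_sum (t := Finset.univ)
    (fun i _ => sq_nonneg ⟪b i, v⟫) hweights
    (fun i _ => Set.mem_Ici.mpr (sq_nonneg (hA.1.eigenvalues i)))
  refine (pow_le_pow_iff_left₀ (norm_nonneg _) (by positivity) two_ne_zero).mp ?_
  rw [hAαv, Real.rpow_pow_comm (norm_nonneg _), hAv]
  exact hjensen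

/-- Let `A`, `B` be self-adjoint positive definite matrices, `(eⱼ)` an orthonormal
eigenbasis of `B` with eigenvalues `λⱼ > 0`, and `0 < α < 1`.  Then
`|A^α B^α|_op ≤ n · max_j λⱼ^α |A^α eⱼ|` and, for each `j`,
`λⱼ^α |A^α eⱼ| ≤ |A B eⱼ|^α` (Hölder–McCarthy inequality). -/
theorem stmt_6 (n : ℕ) (hn : 0 < n) (A B : Matrix (Fin n) (Fin n) ℝ)
    (hA : A.PosDef) (hB : B.PosDef) (α : ℝ) (hα0 : 0 < α) (hα1 : α < 1)
    (e : Fin n → EuclideanSpace ℝ (Fin n)) (he : Orthonormal ℝ e)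
    (lam : Fin n → ℝ) (hlam : ∀ j, 0 < lam j)
    (heig : ∀ j, Matrix.toEuclideanCLM (𝕜 := ℝ) B (e j) = lam j • e j) :
    opNorm (hA.1.cfc (fun x => x ^ α) * hB.1.cfc (fun x => x ^ α)) ≤
      (n : ℝ) * Finset.univ.sup'
        (Finset.univ_nonempty_iff.mpr (Fin.pos_iff_nonempty.mp hn))
        (fun j => lam j ^ α *
          ‖Matrix.toEuclideanCLM (𝕜 := ℝ) (hA.1.cfc (fun x => x ^ α)) (e j)‖) ∧
    ∀ j, lam j ^ α *
        ‖Matrix.toEuclideanCLM (𝕜 := ℝ) (hA.1.cfc (fun x => x ^ α)) (e j)‖ ≤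
      ‖Matrix.toEuclideanCLM (𝕜 := ℝ) (A * B) (e j)‖ ^ α := by
  set Aα := hA.1.cfc (fun x => x ^ α)
  set Bα := hB.1.cfc (fun x => x ^ α)
  have hAαBα (j : Fin n) : ‖φ (Aα * Bα) (e j)‖ = lam j ^ α * ‖φ Aα (e j)‖ := by
    rw [map_mul, mul_apply_eq_comp, hB.1.toEuclideanCLM_cfc_of_eq_smul _ (heig j), map_smul,
      norm_smul, Real.norm_of_nonneg (Real.rpow_nonneg (hlam j).le α)]
  refine ⟨?_, fun j => ?_⟩
  · let b := OrthonormalBasis.mk he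
      (he.linearIndependent.span_eq_top_of_card_eq_finrank' (by simp)).ge
    calc opNorm (Aα * Bα) ≤ ∑ j, ‖φ (Aα * Bα) (b j)‖ := b.opNorm_le_sum_norm_apply _
      _ = ∑ j, lam j ^ α * ‖φ Aα (e j)‖ := by simp only [b, OrthonormalBasis.coe_mk, hAαBα]
      _ ≤ Finset.univ.card • Finset.univ.sup' _ (fun j => lam j ^ α * ‖φ Aα (e j)‖) :=
          Finset.sum_le_card_nsmul _ _ _ fun j hj =>
            Finset.le_sup' (fun j => lam j ^ α * ‖φ Aα (e j)‖) hj
      _ = _ := by rw [Finset.card_univ, Fintype.card_fin, nsmul_eq_mul]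
  · calc lam j ^ α * ‖φ Aα (e j)‖ ≤ lam j ^ α * ‖φ A (e j)‖ ^ α :=
          mul_le_mul_of_nonneg_left
            (hA.posSemidef.norm_toEuclideanCLM_cfc_rpow_le hα0.le hα1.le (he.1 j))
            (Real.rpow_nonneg (hlam j).le α)
      _ = (lam j * ‖φ A (e j)‖) ^ α := (Real.mul_rpow (hlam j).le (norm_nonneg _)).symm
      _ = ‖φ (A * B) (e j)‖ ^ α := by
          rw [map_mul, mul_apply_eq_comp, heig, map_smul, norm_smul,
            Real.norm_of_nonneg (hlam j).le]
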